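/- Let g ≥ 4 and for each integer t ≥ 1 let b_t = a_1^{t+1} a_2^{t+1} ⋯ a_g^{t+1} a_1^{t+1} a_2^{t+1} a_1^{t+1} ∈ F_g. Then for every integer s, the unique reduced word representing the power b_t^s in F_g has simple (g+1)-length at least |s|. -/

import Mathlib

/-- A letter of the alphabet `A ∪ A⁻¹`: a generator index together with a sign. -/
abbrev Letter (g : ℕ) := Fin g × Bool

/-- The formal inverse of a letter. -/
def Letter.inv {g : ℕ} (a : Letter g) : Letter g := (a.1, !a.2)

/-- A word is (freely) reduced if it equals its free reduction. -/
def IsReducedWord {g : ℕ} (w : List (Letter g)) : Prop :=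
  FreeGroup.reduce w = w

/-- The Whitehead graph of a word `x`: vertices are the letters `A ∪ A⁻¹`, and each
pair of consecutive letters `a b` occurring in `x` contributes an edge from `a` to `b⁻¹`. -/
def whiteheadGraph (g : ℕ) (x : List (Letter g)) : SimpleGraph (Letter g) where
  Adj u v := u ≠ v ∧ ([u, Letter.inv v] <:+: x ∨ [v, Letter.inv u] <:+: x)
  symm := by
    constructor
    intro u v h
    exact ⟨Ne.symm h.1, h.2.symm⟩
  loopless := by
    constructor
    intro u h
    exact h.1 rfl

/-- A graph has a cut vertex if it is disconnected, or some vertex can be removed to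
disconnect it. -/
def HasCutVertex {V : Type*} (G : SimpleGraph V) : Prop :=
  ¬ G.Connected ∨ ∃ v : V, ¬ (G.induce {u | u ≠ v}).Connected

/-- The simple `(g+1)`-length of a reduced word `w`: it is `0` if the Whitehead graph of
`w` has a cut vertex, and otherwise the greatest `t` such that `w` is a concatenation of
`t` subwords each of whose Whitehead graphs has no cut vertex. -/
noncomputable def simpleLength (g : ℕ) (w : List (Letter g)) : ℕ :=
  letI := Classical.propDecidable (HasCutVertex (whiteheadGraph g w))
  if HasCutVertex (whiteheadGraph g w) then 0
  else sSup {t : ℕ | ∃ ws : List (List (Letter g)),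
    ws.length = t ∧ ws.flatten = w ∧
    ∀ u ∈ ws, ¬ HasCutVertex (whiteheadGraph g u)}

/-- The `i`-th generator `a_{i+1}` of the free group `F_g` (or `1` if `i ≥ g`). -/
def gen (g : ℕ) (i : ℕ) : FreeGroup (Fin g) :=
  if h : i < g then FreeGroup.of ⟨i, h⟩ else 1

/-- The element `b_t = a_1^{t+1} a_2^{t+1} ⋯ a_g^{t+1} a_1^{t+1} a_2^{t+1} a_1^{t+1}` of `F_g`. -/
def bElem (g t : ℕ) : FreeGroup (Fin g) :=
  (List.ofFn (fun i : Fin g => (FreeGroup.of i) ^ (t + 1))).prod *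
    (gen g 0) ^ (t + 1) * (gen g 1) ^ (t + 1) * (gen g 0) ^ (t + 1)

/-!
`b_t` is a positive word `W`, so `b_t ^ n` is represented by the reduced word `W ^ n`, and
`b_t ^ (-n)` by its formal inverse, which has the same Whitehead graph and the same simple length.
Since `t ≥ 1`, `W` contains the two-letter subwords `aᵢ aᵢ`, `aᵢ aᵢ₊₁` and `a_g a₁`, so the
Whitehead graph of any word containing `W` contains the Hamiltonian cycle
`a₁⁻¹ a₁ a₂⁻¹ a₂ ⋯ a_g⁻¹ a_g`; a graph with a Hamiltonian cycle has no cut vertex. Hence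
`W ^ n` and each of its `n` factors `W` have Whitehead graphs without cut vertex.
-/

open SimpleGraph Function

theorem not_hasCutVertex_of_bijective_hom {V W : Type*} {G : SimpleGraph V} {H : SimpleGraph W}
    (φ : G →g H) (hφ : Bijective φ) (hG : ¬HasCutVertex G) : ¬HasCutVertex H := by
  simp only [HasCutVertex, not_or, not_not, not_exists] at hG ⊢
  refine ⟨hG.1.map φ hφ.2, fun w => ?_⟩
  obtain ⟨v, rfl⟩ := hφ.2 w
  let ψ : G.induce {u | u ≠ v} →g H.induce {u | u ≠ φ v} :=
    { toFun := fun u => ⟨φ u, fun h => u.2 (hφ.1 h)⟩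
      map_rel' := φ.map_rel' }
  refine (hG.2 v).map ψ fun ⟨w, hw⟩ => ?_
  obtain ⟨u, rfl⟩ := hφ.2 w
  exact ⟨⟨u, fun h => hw (congrArg φ h)⟩, rfl⟩

theorem not_hasCutVertex_of_le {V : Type*} {G H : SimpleGraph V} (h : G ≤ H)
    (hG : ¬HasCutVertex G) : ¬HasCutVertex H :=
  not_hasCutVertex_of_bijective_hom (Hom.ofLE h) bijective_id hG

theorem cycleGraph_not_hasCutVertex {n : ℕ} (hn : 2 ≤ n) : ¬HasCutVertex (cycleGraph n) := by
  obtain ⟨m, rfl⟩ : ∃ m, n = m + 2 := ⟨n - 2, by omega⟩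
  rintro (hc | ⟨v, hv⟩)
  · exact hc cycleGraph_connected
  -- removing `v` leaves the path `v + 1, v + 2, …, v + (m + 1)`
  let φ : pathGraph (m + 1) →g (cycleGraph (m + 2)).induce {u | u ≠ v} :=
    { toFun := fun k => ⟨v + k.succ, by simp [Fin.succ_ne_zero]⟩
      map_rel' := fun {k l} h => by
        simp only [comap_adj, Embedding.coe_subtype, cycleGraph_adj, add_sub_add_left_eq_sub,
          sub_eq_iff_eq_add, Fin.ext_iff, Fin.val_add, Fin.val_succ, Fin.val_one]
        rw [pathGraph_adj] at h
        rcases h with h | h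
        · right; rw [Nat.mod_eq_of_lt (by omega)]; omega
        · left; rw [Nat.mod_eq_of_lt (by omega)]; omega }
  refine hv ((pathGraph_connected m).map φ fun ⟨u, hu⟩ => ?_)
  exact ⟨(u - v).pred (sub_ne_zero.2 hu), by simp [φ]⟩

theorem not_hasCutVertex_of_cycle {V : Type*} {G : SimpleGraph V} {n : ℕ} [NeZero n]
    (hn : 2 ≤ n) (f : Fin n → V) (hf : Bijective f) (hadj : ∀ k, G.Adj (f k) (f (k + 1))) :
    ¬HasCutVertex G := by
  obtain ⟨m, rfl⟩ : ∃ m, n = m + 2 := ⟨n - 2, by omega⟩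
  let φ : cycleGraph (m + 2) →g G :=
    { toFun := f
      map_rel' := fun {u v} h => by
        rcases cycleGraph_adj.1 h with h | h <;> rw [sub_eq_iff_eq_add'] at h <;> subst h
        exacts [(hadj v).symm, hadj u] }
  exact not_hasCutVertex_of_bijective_hom φ hf (cycleGraph_not_hasCutVertex hn)

theorem List.pair_infix_flatMap_replicate {α : Type*} {a b : α} {l : List α} (h : [a, b] <:+: l)
    (n : ℕ) : [a, b] <:+: l.flatMap (List.replicate (n + 1)) := by
  obtain ⟨s, r, rfl⟩ := h
  have hab : [a, b] <:+: List.replicate (n + 1) a ++ List.replicate (n + 1) b := by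
    refine ⟨List.replicate n a, List.replicate n b, ?_⟩
    rw [List.replicate_succ' (a := a), List.replicate_succ (a := b)]
    simp
  exact hab.trans ⟨s.flatMap (List.replicate (n + 1)), r.flatMap (List.replicate (n + 1)), by simp⟩

theorem List.pair_self_infix_flatMap_replicate {α : Type*} {a : α} {l : List α} (h : a ∈ l)
    (n : ℕ) : [a, a] <:+: l.flatMap (List.replicate (n + 2)) :=
  (List.prefix_append [a, a] (List.replicate n a)).isInfix.trans
    (List.infix_of_mem_flatten (List.mem_map_of_mem h))

theorem Fin.pair_infix_finRange_append_zero {g : ℕ} [NeZero g] (i : Fin g) :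
    [i, i + 1] <:+: List.finRange g ++ [0] := by
  have hi := i.isLt
  have hlen : [i, i + 1].length + i ≤ (List.finRange g ++ [0]).length := by
    simp only [List.length_cons, List.length_nil, List.length_append, List.length_finRange]
    omega
  refine List.infix_iff_getElem?.2 ⟨i, hlen, fun j hj => ?_⟩
  match j with
  | 0 => simp [hi]
  | 1 =>
    rcases lt_or_ge (i.val + 1) g with h | h
    · simp [h, Fin.ext_iff, Fin.val_add, Nat.mod_eq_of_lt, add_comm]
    · have hwrap : i + 1 = 0 := by
        ext
        rw [Fin.val_add, Fin.val_one', Nat.add_mod_mod, show i.val + 1 = g by omega, Nat.mod_self]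
        rfl
      rw [hwrap, show 1 + i.val = (List.finRange g).length by rw [List.length_finRange]; omega,
        List.getElem?_append_right le_rfl]
      simp

theorem List.IsInfix.invRev {α : Type*} {l w : List (α × Bool)} (h : l <:+: w) :
    FreeGroup.invRev l <:+: FreeGroup.invRev w :=
  (h.map _).reverse

theorem FreeGroup.invRev_flatten {α : Type*} (ws : List (List (α × Bool))) :
    FreeGroup.invRev ws.flatten = (ws.map FreeGroup.invRev).reverse.flatten := by
  induction ws with
  | nil => rfl
  | cons u ws ih => simp [FreeGroup.invRev_append, ih]

theorem FreeGroup.toWord_prod_map_of {α : Type*} [DecidableEq α] (l : List α) :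
    (l.map FreeGroup.of).prod.toWord = l.map (·, true) := by
  have hmk : (l.map FreeGroup.of).prod = FreeGroup.mk (l.map (·, true)) := by
    induction l with
    | nil => rfl
    | cons a l ih => simp [ih, FreeGroup.of, FreeGroup.mul_mk]
  rw [hmk, FreeGroup.toWord_mk, FreeGroup.IsReduced.reduce_eq]
  simpa [FreeGroup.IsReduced, List.isChain_map] using
    (List.pairwise_of_forall fun _ _ => trivial).isChain

theorem Letter.inv_inv {g : ℕ} (a : Letter g) : a.inv.inv = a := by
  simp [Letter.inv]

theorem whiteheadGraph_adj_of_infix {g : ℕ} {x : List (Letter g)} {a b : Letter g}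
    (h : [a, b] <:+: x) (hne : a ≠ b.inv) : (whiteheadGraph g x).Adj a b.inv :=
  ⟨hne, Or.inl (by rwa [Letter.inv_inv])⟩

theorem whiteheadGraph_mono {g : ℕ} {x y : List (Letter g)} (h : x <:+: y) :
    whiteheadGraph g x ≤ whiteheadGraph g y :=
  fun _ _ ⟨hne, hxy⟩ => ⟨hne, hxy.imp (·.trans h) (·.trans h)⟩

theorem hasCutVertex_whiteheadGraph_nil (g : ℕ) : HasCutVertex (whiteheadGraph g []) := by
  have hbot : whiteheadGraph g [] = ⊥ := by
    ext u v
    simp [whiteheadGraph]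
  refine Or.inl fun hc => ?_
  obtain ⟨i, b⟩ := hc.nonempty.some
  have := reachable_bot.1 (hbot ▸ hc.preconnected (i, b) (i, !b))
  simp at this

theorem pair_infix_invRev_iff {g : ℕ} {y : List (Letter g)} {a b : Letter g} :
    [a, b] <:+: FreeGroup.invRev y ↔ [b.inv, a.inv] <:+: y := by
  have key (y : List (Letter g)) (a b : Letter g) (h : [a, b] <:+: FreeGroup.invRev y) :
      [b.inv, a.inv] <:+: y := by
    have := h.invRev
    rw [FreeGroup.invRev_invRev] at this
    simpa [FreeGroup.invRev, Letter.inv] using this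
  refine ⟨key y a b, fun h => ?_⟩
  rw [← FreeGroup.invRev_invRev (L₁ := y)] at h
  simpa [Letter.inv_inv] using key _ _ _ h

theorem whiteheadGraph_invRev {g : ℕ} (x : List (Letter g)) :
    whiteheadGraph g (FreeGroup.invRev x) = whiteheadGraph g x := by
  ext u v
  simp only [whiteheadGraph, pair_infix_invRev_iff, Letter.inv_inv, or_comm]

theorem not_hasCutVertex_whiteheadGraph_of_infix {g : ℕ} [NeZero g] {x : List (Letter g)}
    (hsq : ∀ i : Fin g, [(i, true), (i, true)] <:+: x)
    (hsucc : ∀ i : Fin g, [(i, true), (i + 1, true)] <:+: x) :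
    ¬HasCutVertex (whiteheadGraph g x) := by
  have hg : 0 < g := Nat.pos_of_neZero g
  -- the Hamiltonian cycle `(0, false), (0, true), (1, false), (1, true), …`: the subword
  -- `aᵢ aᵢ` joins `aᵢ` to `aᵢ⁻¹`, and `aᵢ aᵢ₊₁` joins `aᵢ` to `aᵢ₊₁⁻¹`
  let f : Fin (2 * g) → Letter g := fun k => (⟨k / 2, by omega⟩, decide (k.val % 2 = 1))
  have hf : Bijective f := by
    refine (Fintype.bijective_iff_injective_and_card f).2 ⟨fun k l hkl => ?_, by simp [mul_comm]⟩
    simp only [f, Prod.ext_iff, Fin.ext_iff, decide_eq_decide] at hkl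
    omega
  refine not_hasCutVertex_of_cycle (by omega) f hf fun k => ?_
  have hk1 : ((k + 1 : Fin (2 * g)) : ℕ) = (k + 1) % (2 * g) := by
    simp [Fin.val_add, Nat.add_mod]
  set i : Fin g := ⟨k / 2, by omega⟩
  rcases Nat.mod_two_eq_zero_or_one k with hpar | hpar
  · have hfk : f k = (i, false) := by simp [f, i, hpar]
    have hfk1 : f (k + 1) = (i, true) := by
      simp only [f, i, Prod.ext_iff, Fin.ext_iff, hk1]
      rw [Nat.mod_eq_of_lt (by omega), decide_eq_true_eq]
      omega
    rw [hfk, hfk1]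
    exact (whiteheadGraph_adj_of_infix (hsq i) (by simp [Letter.inv])).symm
  · have hfk : f k = (i, true) := by simp [f, i, hpar]
    have hfk1 : f (k + 1) = (i + 1, false) := by
      simp only [f, i, Prod.ext_iff, Fin.ext_iff, hk1, Fin.val_add, Fin.val_one']
      rw [show (k : ℕ) + 1 = 2 * (k / 2 + 1) by omega, Nat.mul_mod_mul_left, Nat.add_mod_mod]
      simp
    rw [hfk, hfk1]
    exact whiteheadGraph_adj_of_infix (hsucc i) (by simp [Letter.inv])

theorem le_simpleLength {g : ℕ} {w : List (Letter g)} {ws : List (List (Letter g))}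
    (hw : ¬HasCutVertex (whiteheadGraph g w)) (hws : ws.flatten = w)
    (hpieces : ∀ u ∈ ws, ¬HasCutVertex (whiteheadGraph g u)) :
    ws.length ≤ simpleLength g w := by
  rw [simpleLength, if_neg hw]
  refine le_csSup ⟨w.length, ?_⟩ ⟨ws, rfl, hws, hpieces⟩
  rintro _ ⟨vs, rfl, rfl, hvs⟩
  have hne : ∀ u ∈ vs, 1 ≤ u.length := fun u hu =>
    List.length_pos_iff.2 fun hnil => hvs u hu (hnil ▸ hasCutVertex_whiteheadGraph_nil g)
  simpa [List.length_flatten] using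
    List.length_le_sum_of_one_le (vs.map List.length) (by simpa using hne)

theorem simpleLength_invRev {g : ℕ} (w : List (Letter g)) :
    simpleLength g (FreeGroup.invRev w) = simpleLength g w := by
  have key (w : List (Letter g)) (ws : List (List (Letter g))) (hws : ws.flatten = w)
      (hpieces : ∀ u ∈ ws, ¬HasCutVertex (whiteheadGraph g u)) :
      ∃ vs : List (List (Letter g)), vs.length = ws.length ∧
        vs.flatten = FreeGroup.invRev w ∧ ∀ u ∈ vs, ¬HasCutVertex (whiteheadGraph g u) := by
    subst hws
    refine ⟨(ws.map FreeGroup.invRev).reverse, by simp, (FreeGroup.invRev_flatten ws).symm, ?_⟩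
    simpa [whiteheadGraph_invRev] using hpieces
  have hsplit : {n | ∃ ws : List (List (Letter g)), ws.length = n ∧
      ws.flatten = FreeGroup.invRev w ∧ ∀ u ∈ ws, ¬HasCutVertex (whiteheadGraph g u)} =
      {n | ∃ ws : List (List (Letter g)), ws.length = n ∧
      ws.flatten = w ∧ ∀ u ∈ ws, ¬HasCutVertex (whiteheadGraph g u)} := by
    ext n
    constructor
    · rintro ⟨ws, rfl, hws, hpieces⟩
      obtain ⟨vs, hlen, hvs, hvpieces⟩ := key _ ws hws hpieces
      exact ⟨vs, hlen, by rw [hvs, FreeGroup.invRev_invRev], hvpieces⟩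
    · rintro ⟨ws, rfl, hws, hpieces⟩
      exact key _ ws hws hpieces
  unfold simpleLength
  rw [whiteheadGraph_invRev, hsplit]

theorem le_simpleLength_flatten_replicate {g : ℕ} {u : List (Letter g)}
    (hu : ¬HasCutVertex (whiteheadGraph g u)) (n : ℕ) :
    n ≤ simpleLength g (List.replicate n u).flatten := by
  rcases n.eq_zero_or_pos with rfl | hn
  · exact Nat.zero_le _
  have hinfix : u <:+: (List.replicate n u).flatten :=
    List.infix_of_mem_flatten (List.mem_replicate.2 ⟨hn.ne', rfl⟩)
  simpa using le_simpleLength (not_hasCutVertex_of_le (whiteheadGraph_mono hinfix) hu) rfl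
    fun v hv => List.eq_of_mem_replicate hv ▸ hu

/-- The positive word representing `bElem g t`, with `a_{i+1}` written as `i : Fin g`. -/
def baseLetters (g t : ℕ) [NeZero g] : List (Fin g) :=
  (List.finRange g ++ [0, 1, 0]).flatMap (List.replicate (t + 1))

theorem bElem_eq_prod_baseLetters {g : ℕ} [NeZero g] (hg : 2 ≤ g) (t : ℕ) :
    bElem g t = ((baseLetters g t).map FreeGroup.of).prod := by
  have h0 : gen g 0 = FreeGroup.of 0 := by rw [gen, dif_pos (by omega)]; rfl
  have h1 : gen g 1 = FreeGroup.of 1 := by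
    rw [gen, dif_pos (by omega)]
    exact congrArg _ (Fin.ext (by rw [Fin.val_one', Nat.mod_eq_of_lt (by omega)]))
  simp [bElem, baseLetters, h0, h1, List.ofFn_eq_map, List.flatMap, List.map_flatten,
    List.prod_flatten, mul_assoc, Function.comp_def, List.map_replicate, List.prod_replicate]

theorem not_hasCutVertex_whiteheadGraph_baseLetters {g t : ℕ} [NeZero g] (ht : 1 ≤ t) :
    ¬HasCutVertex (whiteheadGraph g ((baseLetters g t).map (·, true))) := by
  obtain ⟨t, rfl⟩ : ∃ t', t = t' + 1 := ⟨t - 1, by omega⟩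
  have hmap {a b : Fin g} (h : [a, b] <:+: baseLetters g (t + 1)) :
      [(a, true), (b, true)] <:+: (baseLetters g (t + 1)).map (·, true) :=
    h.map (·, true)
  refine not_hasCutVertex_whiteheadGraph_of_infix (fun i => hmap ?_) (fun i => hmap ?_)
  · exact List.pair_self_infix_flatMap_replicate (by simp) t
  · refine List.pair_infix_flatMap_replicate ?_ (t + 1)
    exact (Fin.pair_infix_finRange_append_zero i).trans ⟨[], [1, 0], by simp⟩

theorem toWord_bElem_pow {g : ℕ} [NeZero g] (hg : 2 ≤ g) (t n : ℕ) :
    (bElem g t ^ n).toWord = (List.replicate n ((baseLetters g t).map (·, true))).flatten := by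
  rw [bElem_eq_prod_baseLetters hg, ← List.prod_replicate]
  have hprod : (List.replicate n ((baseLetters g t).map FreeGroup.of).prod).prod =
      ((List.replicate n (baseLetters g t)).flatten.map FreeGroup.of).prod := by
    simp [List.map_flatten, List.prod_flatten, List.map_replicate]
  rw [hprod, FreeGroup.toWord_prod_map_of, List.map_flatten, List.map_replicate]

/-- For `g ≥ 4`, `t ≥ 1` and any integer `s`, the unique reduced word representing the power
`b_t^s` in `F_g` has simple `(g+1)`-length at least `|s|`. -/
theorem natAbs_le_simpleLength_bElem_zpow (g : ℕ) (hg : 4 ≤ g)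
    (t : ℕ) (ht : 1 ≤ t) (s : ℤ) :
    s.natAbs ≤ simpleLength g (FreeGroup.toWord ((bElem g t) ^ s)) := by
  have : NeZero g := ⟨by omega⟩
  have hpow (n : ℕ) : n ≤ simpleLength g (FreeGroup.toWord (bElem g t ^ n)) := by
    rw [toWord_bElem_pow (by omega)]
    exact le_simpleLength_flatten_replicate (not_hasCutVertex_whiteheadGraph_baseLetters ht) n
  rcases Int.eq_nat_or_neg s with ⟨n, rfl | rfl⟩
  · simpa using hpow n
  · simpa [FreeGroup.toWord_inv, simpleLength_invRev] using hpow n
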